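/- Remainder bound for the linearization (inequality (eq:rhoikbddtwoparts) in pointwise form): under Assumption 1, for every 1 ≤ i ≤ p, every τ ∈ [τ0, τ1], every k ≥ 1 and every y ∈ ℝ, | F_i(Q_i(τ)) − E[g_{aγ_k}(y − X_{i,k+1})] + f_i(Q_i(τ)) (y − Q_i(τ)) | ≤ 2 a c_f γ_k + c_f (y − Q_i(τ))². -/

import Mathlib

open MeasureTheory ProbabilityTheory Real

/-- The piecewise-linear smoothing of the indicator function. -/
noncomputable def gfun (x : ℝ) : ℝ :=
  if 1 ≤ x then 1 else if -1 ≤ x then (x + 1) / 2 else 0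

/-- Rescaled smoothing function `g_h(x) = g(x/h)`. -/
noncomputable def gsm (h x : ℝ) : ℝ := gfun (x / h)

/-- Learning rate `γ_k = c_γ k^{-β}`. -/
noncomputable def gam (cγ β : ℝ) (k : ℕ) : ℝ := cγ * (k : ℝ) ^ (-β)

/-!
Write `F(z) = ν(-∞, z]` for the law `ν` of `X_{i,1}`, which is also the law of `X_{i,k+1}`.
The quantity to bound splits as `(F(Q) - F(y) + f(Q)(y - Q)) + (F(y) - ∫ g_h(y - x) dν)`.
The first term is `-∫_Q^y (f - f(Q))`, at most `c_f (y - Q)²` because `f` is `c_f`-Lipschitz.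
In the second, `1_{x ≤ y}` and `g_h(y - x)` agree outside `[y - h, y + h]` and differ by at most
`1` inside, so it is at most `ν[y - h, y + h] ≤ 2 c_f h` with `h = a γ_k`.
-/

open Set

lemma gam_pos {cγ : ℝ} (hcγ : 0 < cγ) (β : ℝ) {k : ℕ} (hk : 0 < k) : 0 < gam cγ β k :=
  mul_pos hcγ (rpow_pos_of_pos (Nat.cast_pos.mpr hk) _)

section Smoothing

lemma measurable_gfun : Measurable gfun :=
  Measurable.ite (measurableSet_le measurable_const measurable_id) measurable_const <|
    Measurable.ite (measurableSet_le measurable_const measurable_id) (by fun_prop) measurable_const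

lemma measurable_gsm (h : ℝ) : Measurable (gsm h) :=
  measurable_gfun.comp (measurable_id.div_const h)

lemma measurable_gsm_const_sub (h y : ℝ) : Measurable fun x => gsm h (y - x) :=
  (measurable_gsm h).comp (measurable_const.sub measurable_id)

lemma gfun_nonneg (x : ℝ) : 0 ≤ gfun x := by
  unfold gfun
  split_ifs <;> linarith

lemma gfun_le_one (x : ℝ) : gfun x ≤ 1 := by
  unfold gfun
  split_ifs <;> linarith

lemma gfun_of_one_le {x : ℝ} (hx : 1 ≤ x) : gfun x = 1 := if_pos hx

lemma gfun_of_lt_neg_one {x : ℝ} (hx : x < -1) : gfun x = 0 := by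
  simp [gfun, not_le.mpr hx, show ¬ 1 ≤ x by linarith]

lemma abs_indicator_Iic_sub_gsm_le {h : ℝ} (hh : 0 < h) (y x : ℝ) :
    |(Iic y).indicator 1 x - gsm h (y - x)| ≤ (Icc (y - h) (y + h)).indicator 1 x := by
  by_cases hlow : x < y - h
  · have hg : gsm h (y - x) = 1 := gfun_of_one_le <| (le_div_iff₀ hh).mpr (by linarith)
    rw [indicator_of_mem (show x ∈ Iic y from mem_Iic.mpr (by linarith)), Pi.one_apply, hg,
      sub_self, abs_zero]
    exact indicator_nonneg (fun _ _ => zero_le_one) x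
  by_cases hup : y + h < x
  · have hg : gsm h (y - x) = 0 := gfun_of_lt_neg_one <| (div_lt_iff₀ hh).mpr (by linarith)
    simp [hg, show ¬ x ≤ y by linarith, hup]
  have hx : x ∈ Icc (y - h) (y + h) := ⟨not_lt.mp hlow, not_lt.mp hup⟩
  have hg0 := gfun_nonneg ((y - x) / h)
  have hg1 := gfun_le_one ((y - x) / h)
  rw [indicator_of_mem hx, Pi.one_apply, gsm, abs_le]
  by_cases hxy : x ∈ Iic y
  · rw [indicator_of_mem hxy, Pi.one_apply]; constructor <;> linarith
  · rw [indicator_of_notMem hxy]; constructor <;> linarith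

lemma abs_measureReal_Iic_sub_integral_gsm_le {ν : Measure ℝ} [IsFiniteMeasure ν] {h : ℝ}
    (hh : 0 < h) (y : ℝ) :
    |ν.real (Iic y) - ∫ x, gsm h (y - x) ∂ν| ≤ ν.real (Icc (y - h) (y + h)) := by
  have hg : Integrable (fun x => gsm h (y - x)) ν :=
    .of_bound (measurable_gsm_const_sub h y).aestronglyMeasurable
      1 (ae_of_all _ fun x =>
        (norm_of_nonneg (gfun_nonneg _)).trans_le (gfun_le_one _))
  have hind : Integrable ((Iic y).indicator (1 : ℝ → ℝ)) ν :=
    (integrable_const 1).indicator measurableSet_Iic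
  rw [← integral_indicator_one measurableSet_Iic, ← integral_indicator_one measurableSet_Icc,
    ← integral_sub hind hg]
  exact abs_integral_le_integral_abs.trans <|
    integral_mono (hind.sub hg).abs ((integrable_const 1).indicator measurableSet_Icc)
      (abs_indicator_Iic_sub_gsm_le hh y)

end Smoothing

section Density

variable {α : Type*} [MeasurableSpace α] {μ ν : Measure α} {f : α → ℝ}

lemma measureReal_withDensity_ofReal (hf : Measurable f) {s : Set α} (hs : MeasurableSet s) :
    (μ.withDensity fun x => ENNReal.ofReal (f x)).real s = ∫ x in s, max (f x) 0 ∂μ := by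
  rw [measureReal_def, withDensity_apply _ hs,
    ← integral_toReal hf.ennreal_ofReal.aemeasurable (ae_of_all _ fun _ => ENNReal.ofReal_lt_top)]
  rfl

lemma integrable_max_zero_of_withDensity_ofReal [IsFiniteMeasure ν]
    (hν : ν = μ.withDensity fun x => ENNReal.ofReal (f x)) (hf : Measurable f) :
    Integrable (fun x => max (f x) 0) μ := by
  refine integrable_toReal_of_lintegral_ne_top hf.ennreal_ofReal.aemeasurable ?_
  rw [← setLIntegral_univ, ← withDensity_apply _ MeasurableSet.univ, ← hν]
  exact measure_ne_top _ _

end Density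

section RealDensity

variable {ν : Measure ℝ} {f : ℝ → ℝ}

lemma measureReal_Iic_sub_Iic_of_withDensity_ofReal [IsFiniteMeasure ν]
    (hν : ν = volume.withDensity fun x => ENNReal.ofReal (f x)) (hf : Measurable f) (x y : ℝ) :
    ν.real (Iic y) - ν.real (Iic x) = ∫ t in x..y, max (f t) 0 := by
  have hint := integrable_max_zero_of_withDensity_ofReal hν hf
  rw [hν, measureReal_withDensity_ofReal hf measurableSet_Iic,
    measureReal_withDensity_ofReal hf measurableSet_Iic,
    intervalIntegral.integral_Iic_sub_Iic hint.integrableOn hint.integrableOn]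

lemma measureReal_Icc_le_of_withDensity_ofReal
    (hν : ν = volume.withDensity fun x => ENNReal.ofReal (f x)) (hf : Measurable f) {c : ℝ}
    (hc : 0 ≤ c) (hfc : ∀ x, f x ≤ c) {a b : ℝ} (hab : a ≤ b) : ν.real (Icc a b) ≤ c * (b - a) := by
  rw [hν, measureReal_withDensity_ofReal hf measurableSet_Icc, ← volume_real_Icc_of_le hab]
  refine (le_norm_self _).trans <| norm_setIntegral_le_of_norm_le_const measure_Icc_lt_top
    fun x _ => ?_
  rw [norm_of_nonneg (le_max_right _ _)]
  exact max_le (hfc x) hc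

lemma abs_measureReal_Iic_sub_Iic_add_linear_le [IsFiniteMeasure ν]
    (hν : ν = volume.withDensity fun x => ENNReal.ofReal (f x)) {K : NNReal}
    (hf : LipschitzWith K f) {q : ℝ} (hq : 0 ≤ f q) (y : ℝ) :
    |ν.real (Iic q) - ν.real (Iic y) + f q * (y - q)| ≤ K * (y - q) ^ 2 := by
  have hcont : Continuous fun t => max (f t) 0 := hf.continuous.max continuous_const
  have hsplit : ν.real (Iic q) - ν.real (Iic y) + f q * (y - q) =
      -∫ t in q..y, (max (f t) 0 - f q) := by
    rw [intervalIntegral.integral_sub (hcont.intervalIntegrable _ _) intervalIntegrable_const,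
      intervalIntegral.integral_const, smul_eq_mul,
      ← measureReal_Iic_sub_Iic_of_withDensity_ofReal hν hf.continuous.measurable]
    ring
  have hbound : ∀ t ∈ uIoc q y, ‖max (f t) 0 - f q‖ ≤ K * |y - q| := fun t ht =>
    -- `ofReal` clips `f` at `0`, so `hq` is what makes `f q` the value of the true density at `q`.
    calc ‖max (f t) 0 - f q‖ = |max (f t) 0 - max (f q) 0| := by rw [max_eq_left hq]; rfl
      _ ≤ |f t - f q| := abs_max_sub_max_le_abs _ _ _
      _ ≤ K * |t - q| := by simpa only [dist_eq] using hf.dist_le_mul t q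
      _ ≤ K * |y - q| :=
        mul_le_mul_of_nonneg_left (abs_sub_left_of_mem_uIcc (uIoc_subset_uIcc ht)) K.coe_nonneg
  rw [hsplit, abs_neg, ← sq_abs, sq, ← mul_assoc]
  exact intervalIntegral.norm_integral_le_of_norm_le_const hbound

end RealDensity

theorem smoothed_sgd_linearization_remainder_general
    (τ0 τ1 cγ β a cL cf : ℝ)
    (hcγ : 0 < cγ) (ha : 1 / 2 < a)
    (hcL : 0 < cL) (hcf : 0 < cf)
    (p : ℕ) (Ω : Type) [MeasurableSpace Ω] (μ : Measure Ω) [IsProbabilityMeasure μ]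
    (X : ℕ → ℕ → Ω → ℝ) (F f f' : ℕ → ℝ → ℝ) (Q : ℕ → ℝ → ℝ)
    (hXmeas : ∀ i k, Measurable (X i k))
    -- the X_{i,k}, k ≥ 1, are independent and identically distributed
    (hident : ∀ i k, 1 ≤ k → Measure.map (X i k) μ = Measure.map (X i 1) μ)
    -- F_i is the cdf of X_{i,1}
    (hcdf : ∀ i x, F i x = (μ {ω | X i 1 ω ≤ x}).toReal)
    -- X_{i,1} has density f_i with derivative f_i'
    (hdens : ∀ i, Measure.map (X i 1) μ =
      MeasureTheory.volume.withDensity (fun x => ENNReal.ofReal (f i x)))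
    (hderiv : ∀ i x, HasDerivAt (f i) (f' i x) x)
    -- Assumption 1
    (hfbd : ∀ i x, |f i x| ≤ cf)
    (hf'bd : ∀ i x, |f' i x| ≤ cf)
    (hlow : ∀ i τ, 1 ≤ i → i ≤ p → τ0 ≤ τ → τ ≤ τ1 → cL ≤ f i (Q i τ))
    (i k : ℕ) (hi1 : 1 ≤ i) (hip : i ≤ p) (hk : 1 ≤ k)
    (τ : ℝ) (hτl : τ0 ≤ τ) (hτu : τ ≤ τ1) (y : ℝ) :
    |F i (Q i τ) - (∫ ω, gsm (a * gam cγ β k) (y - X i (k + 1) ω) ∂μ) +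
        f i (Q i τ) * (y - Q i τ)| ≤
      2 * a * cf * gam cγ β k + cf * (y - Q i τ) ^ 2 := by
  set h := a * gam cγ β k
  set ν := μ.map (X i 1)
  have hh : 0 < h := mul_pos (by linarith) (gam_pos hcγ β hk)
  have hF : ∀ z, F i z = ν.real (Iic z) := fun z => by
    rw [hcdf, map_measureReal_apply (hXmeas i 1) measurableSet_Iic]; rfl
  have hE : ∫ ω, gsm h (y - X i (k + 1) ω) ∂μ = ∫ x, gsm h (y - x) ∂ν := by
    rw [← show μ.map (X i (k + 1)) = ν from hident i (k + 1) (by omega)]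
    exact (integral_map (hXmeas i (k + 1)).aemeasurable
      (measurable_gsm_const_sub h y).aestronglyMeasurable).symm
  have hlip : LipschitzWith ⟨cf, hcf.le⟩ (f i) :=
    lipschitzWith_of_nnnorm_deriv_le (fun x => (hderiv i x).differentiableAt) fun x => by
      rw [(hderiv i x).deriv]; exact hf'bd i x
  have hlinear := abs_measureReal_Iic_sub_Iic_add_linear_le (hdens i) hlip
    (hcL.le.trans (hlow i τ hi1 hip hτl hτu)) y
  have hbias := abs_measureReal_Iic_sub_integral_gsm_le (ν := ν) hh y
  have hmass := measureReal_Icc_le_of_withDensity_ofReal (hdens i) hlip.continuous.measurable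
    hcf.le (fun x => (le_abs_self _).trans (hfbd i x)) (by linarith : y - h ≤ y + h)
  rw [hF, hE]
  calc _ = |(ν.real (Iic (Q i τ)) - ν.real (Iic y) + f i (Q i τ) * (y - Q i τ)) +
          (ν.real (Iic y) - ∫ x, gsm h (y - x) ∂ν)| := by ring_nf
    _ ≤ cf * (y - Q i τ) ^ 2 + cf * (y + h - (y - h)) :=
        (abs_add_le _ _).trans (add_le_add hlinear (hbias.trans hmass))
    _ = 2 * a * cf * gam cγ β k + cf * (y - Q i τ) ^ 2 := by ring

/-- **Remainder bound for the linearization** (inequality (eq:rhoikbddtwoparts) in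
pointwise form): under Assumption 1, for every `1 ≤ i ≤ p`, `τ ∈ [τ0, τ1]`, `k ≥ 1`
and `y ∈ ℝ`,
`| F_i(Q_i(τ)) − E[g_{aγ_k}(y − X_{i,k+1})] + f_i(Q_i(τ)) (y − Q_i(τ)) |
  ≤ 2 a c_f γ_k + c_f (y − Q_i(τ))²`. -/
theorem smoothed_sgd_linearization_remainder
    (τ0 τ1 cγ β a cL cf M : ℝ)
    (hτ0 : 0 < τ0) (hτ01 : τ0 < τ1) (hτ1 : τ1 < 1)
    (hcγ : 0 < cγ) (hβ1 : 1 / 2 < β) (hβ2 : β < 1) (ha : 1 / 2 < a)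
    (hcL : 0 < cL) (hcf : 0 < cf)
    (p : ℕ) (Ω : Type) [MeasurableSpace Ω] (μ : Measure Ω) [IsProbabilityMeasure μ]
    (X : ℕ → ℕ → Ω → ℝ) (F f f' : ℕ → ℝ → ℝ) (Q : ℕ → ℝ → ℝ)
    (hXmeas : ∀ i k, Measurable (X i k))
    -- the X_{i,k}, k ≥ 1, are independent and identically distributed
    (hindep : ∀ i, iIndepFun (fun k => X i k) μ)
    (hident : ∀ i k, 1 ≤ k → Measure.map (X i k) μ = Measure.map (X i 1) μ)
    -- F_i is the cdf of X_{i,1}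
    (hcdf : ∀ i x, F i x = (μ {ω | X i 1 ω ≤ x}).toReal)
    -- X_{i,1} has density f_i with derivative f_i'
    (hdens : ∀ i, Measure.map (X i 1) μ =
      MeasureTheory.volume.withDensity (fun x => ENNReal.ofReal (f i x)))
    (hderiv : ∀ i x, HasDerivAt (f i) (f' i x) x)
    -- Assumption 1
    (hfbd : ∀ i x, |f i x| ≤ cf)
    (hf'bd : ∀ i x, |f' i x| ≤ cf)
    (hquant : ∀ i τ, τ0 ≤ τ → τ ≤ τ1 → F i (Q i τ) = τ)
    (hlow : ∀ i τ, 1 ≤ i → i ≤ p → τ0 ≤ τ → τ ≤ τ1 → cL ≤ f i (Q i τ))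
    (hQbd : ∀ i τ, 1 ≤ i → i ≤ p → τ0 ≤ τ → τ ≤ τ1 → |Q i τ| ≤ M)
    (i k : ℕ) (hi1 : 1 ≤ i) (hip : i ≤ p) (hk : 1 ≤ k)
    (τ : ℝ) (hτl : τ0 ≤ τ) (hτu : τ ≤ τ1) (y : ℝ) :
    |F i (Q i τ) - (∫ ω, gsm (a * gam cγ β k) (y - X i (k + 1) ω) ∂μ) +
        f i (Q i τ) * (y - Q i τ)| ≤
      2 * a * cf * gam cγ β k + cf * (y - Q i τ) ^ 2 :=
  smoothed_sgd_linearization_remainder_general τ0 τ1 cγ β a cL cf hcγ ha hcL hcf p Ω μ X F f f' Q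
    hXmeas hident hcdf hdens hderiv hfbd hf'bd hlow i k hi1 hip hk τ hτl hτu y
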